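/- Let (X,T) be a topological dynamical system. For any continuous partition of unity Ψ on X, sup over T-invariant Borel probability measures μ of ( h̃_μ(T) − h̃_μ(T,Ψ) ) ≤ h̃(T|Ψ). -/

import Mathlib

open MeasureTheory Filter Set

/-! ### Partitions of unity -/

/-- A finite partition of unity on `X`: a finite family of functions `X → [0,1]`
summing to `1` everywhere. -/
structure PartUnity (X : Type*) where
  n : ℕ
  f : Fin n → X → ℝ
  nonneg : ∀ i x, 0 ≤ f i x
  le_one : ∀ i x, f i x ≤ 1
  sum_one : ∀ x, ∑ i, f i x = 1

namespace PartUnity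

variable {X Y : Type*}

/-- A continuous partition of unity. -/
def Cont [TopologicalSpace X] (Φ : PartUnity X) : Prop := ∀ i, Continuous (Φ.f i)

/-- A measurable partition of unity. -/
def Meas [MeasurableSpace X] (Φ : PartUnity X) : Prop := ∀ i, Measurable (Φ.f i)

/-- A positive partition of unity. -/
def Pos (Φ : PartUnity X) : Prop := ∀ i x, 0 < Φ.f i x

/-- The join `Φ ∨ Ψ = {φ·ψ : φ ∈ Φ, ψ ∈ Ψ}` of two partitions of unity. -/
def join (Φ Ψ : PartUnity X) : PartUnity X where
  n := Φ.n * Ψ.n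
  f k x := Φ.f (finProdFinEquiv.symm k).1 x * Ψ.f (finProdFinEquiv.symm k).2 x
  nonneg k x := mul_nonneg (Φ.nonneg _ x) (Ψ.nonneg _ x)
  le_one k x := mul_le_one₀ (Φ.le_one _ x) (Ψ.nonneg _ x) (Ψ.le_one _ x)
  sum_one x := by
    rw [← Equiv.sum_comp (finProdFinEquiv : Fin Φ.n × Fin Ψ.n ≃ Fin (Φ.n * Ψ.n))
      (fun k => Φ.f (finProdFinEquiv.symm k).1 x * Ψ.f (finProdFinEquiv.symm k).2 x)]
    simp only [Equiv.symm_apply_apply]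
    rw [Fintype.sum_prod_type]
    dsimp only
    rw [← Finset.sum_mul_sum, Φ.sum_one x, Ψ.sum_one x, one_mul]

/-- Pull back a partition of unity by a map: `TΦ = {φ ∘ T : φ ∈ Φ}`. -/
def comp (Φ : PartUnity X) (T : Y → X) : PartUnity Y where
  n := Φ.n
  f i y := Φ.f i (T y)
  nonneg i y := Φ.nonneg i (T y)
  le_one i y := Φ.le_one i (T y)
  sum_one y := Φ.sum_one (T y)

/-- The trivial partition of unity `{1}`. -/
def triv (X : Type*) : PartUnity X where
  n := 1
  f _ _ := 1
  nonneg _ _ := zero_le_one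
  le_one _ _ := le_rfl
  sum_one _ := by simp

/-- `dyn T Φ n` is the dynamical join `Φ₀ⁿ⁻¹ = ⋁_{i=0}^{n-1} TⁱΦ`
(joined with a harmless trivial factor). -/
def dyn (T : X → X) (Φ : PartUnity X) : ℕ → PartUnity X
  | 0 => triv X
  | n + 1 => Φ.join ((dyn T Φ n).comp T)

/-- The product partition of unity `Φ ⊗ Ψ` on `X × Y`. -/
def prod (Φ : PartUnity X) (Ψ : PartUnity Y) : PartUnity (X × Y) where
  n := Φ.n * Ψ.n
  f k p := Φ.f (finProdFinEquiv.symm k).1 p.1 * Ψ.f (finProdFinEquiv.symm k).2 p.2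
  nonneg k p := mul_nonneg (Φ.nonneg _ _) (Ψ.nonneg _ _)
  le_one k p := mul_le_one₀ (Φ.le_one _ _) (Ψ.nonneg _ _) (Ψ.le_one _ _)
  sum_one p := by
    rw [← Equiv.sum_comp (finProdFinEquiv : Fin Φ.n × Fin Ψ.n ≃ Fin (Φ.n * Ψ.n))
      (fun k => Φ.f (finProdFinEquiv.symm k).1 p.1 * Ψ.f (finProdFinEquiv.symm k).2 p.2)]
    simp only [Equiv.symm_apply_apply]
    rw [Fintype.sum_prod_type]
    dsimp only
    rw [← Finset.sum_mul_sum, Φ.sum_one p.1, Ψ.sum_one p.2, one_mul]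

/-- The diameter of a partition of unity: the maximum of the diameters of the
supports of its members. -/
noncomputable def diam [PseudoMetricSpace X] (Φ : PartUnity X) : ℝ :=
  ⨆ i, Metric.diam (tsupport (Φ.f i))

end PartUnity

/-! ### Metric entropy via partitions of unity -/

variable {X Y : Type*}

/-- The static entropy `H̃_μ(Φ) = Σ_φ ( −μ(φ) log μ(φ) + μ(φ log φ) )`. -/
noncomputable def statEnt [MeasurableSpace X] (μ : Measure X) (Φ : PartUnity X) : ℝ :=
  ∑ i, (-((∫ x, Φ.f i x ∂μ) * Real.log (∫ x, Φ.f i x ∂μ)) +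
    ∫ x, Φ.f i x * Real.log (Φ.f i x) ∂μ)

/-- The conditional measure `μ_ψ`, determined by `μ_ψ(φ) = μ(φψ)/μ(ψ)`. -/
noncomputable def condMeas [MeasurableSpace X] (μ : Measure X) (ψ : X → ℝ) : Measure X :=
  (ENNReal.ofReal (∫ x, ψ x ∂μ))⁻¹ • μ.withDensity (fun x => ENNReal.ofReal (ψ x))

/-- The conditional static entropy `H̃_μ(Φ | Ψ) = Σ_ψ μ(ψ) H̃_{μ_ψ}(Φ)`
(terms with `μ(ψ) = 0` vanish since they are multiplied by `μ(ψ) = 0`). -/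
noncomputable def condStatEnt [MeasurableSpace X] (μ : Measure X) (Φ Ψ : PartUnity X) : ℝ :=
  ∑ j, (∫ x, Ψ.f j x ∂μ) * statEnt (condMeas μ (Ψ.f j)) Φ

/-- The local metric entropy `h̃_μ(T,Φ) = lim_n H̃_μ(Φ₀ⁿ⁻¹)/n`. -/
noncomputable def locEnt [MeasurableSpace X] (T : X → X) (μ : Measure X) (Φ : PartUnity X) : ℝ :=
  Filter.atTop.limsup fun n : ℕ => statEnt μ (PartUnity.dyn T Φ n) / (n : ℝ)

/-- The local conditional metric entropy `h̃_μ(T,Φ|Ψ) = lim_n H̃_μ(Φ₀ⁿ⁻¹|Ψ₀ⁿ⁻¹)/n`. -/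
noncomputable def condLocEnt [MeasurableSpace X] (T : X → X) (μ : Measure X)
    (Φ Ψ : PartUnity X) : ℝ :=
  Filter.atTop.limsup fun n : ℕ =>
    condStatEnt μ (PartUnity.dyn T Φ n) (PartUnity.dyn T Ψ n) / (n : ℝ)

/-- The metric entropy `h̃_μ(T)`: supremum of `h̃_μ(T,Φ)` over continuous
partitions of unity. -/
noncomputable def metEnt [TopologicalSpace X] [MeasurableSpace X]
    (T : X → X) (μ : Measure X) : EReal :=
  ⨆ Φ : {Φ : PartUnity X // Φ.Cont}, ((locEnt T μ Φ.1 : ℝ) : EReal)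

/-! ### Topological entropy via partitions of unity -/

/-- The topological static entropy `H̃(Φ) = Σ_φ sup φ`. -/
noncomputable def topStat (Φ : PartUnity X) : ℝ := ∑ i, ⨆ x, Φ.f i x

/-- The local topological entropy `h̃(T,Φ) = lim_n (1/n) log H̃(Φ₀ⁿ⁻¹)`. -/
noncomputable def topLocEnt (T : X → X) (Φ : PartUnity X) : ℝ :=
  Filter.atTop.limsup fun n : ℕ => Real.log (topStat (PartUnity.dyn T Φ n)) / (n : ℝ)

/-- The topological entropy `h̃_top(T)`: supremum of `h̃(T,Φ)` over continuous
partitions of unity. -/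
noncomputable def topEnt [TopologicalSpace X] (T : X → X) : EReal :=
  ⨆ Φ : {Φ : PartUnity X // Φ.Cont}, ((topLocEnt T Φ.1 : ℝ) : EReal)

/-! ### Classical Kolmogorov–Sinai entropy -/

/-- A finite Borel partition of `X` (indexed; atoms may be empty). -/
structure FinBorelPart (X : Type*) [MeasurableSpace X] where
  n : ℕ
  A : Fin n → Set X
  meas : ∀ i, MeasurableSet (A i)
  disj : ∀ i j, i ≠ j → Disjoint (A i) (A j)
  cover : ⋃ i, A i = Set.univ

/-- Local Kolmogorov–Sinai entropy `h_μ(T,𝒜) = lim_n (1/n) Σ_{A ∈ 𝒜₀ⁿ⁻¹} −μ(A) log μ(A)`. -/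
noncomputable def ksLocEnt [MeasurableSpace X] (T : X → X) (μ : Measure X)
    (P : FinBorelPart X) : ℝ :=
  Filter.atTop.limsup fun n : ℕ =>
    (∑ σ : Fin n → Fin P.n,
      Real.negMulLog (μ (⋂ i : Fin n, T^[(i : ℕ)] ⁻¹' P.A (σ i))).toReal) / (n : ℝ)

/-- The Kolmogorov–Sinai metric entropy `h_μ(T)`. -/
noncomputable def ksEnt [MeasurableSpace X] (T : X → X) (μ : Measure X) : EReal :=
  ⨆ P : FinBorelPart X, ((ksLocEnt T μ P : ℝ) : EReal)

/-! ### Classical topological entropy via open covers -/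

/-- A finite open cover of `X`. -/
structure FinOpenCover (X : Type*) [TopologicalSpace X] where
  n : ℕ
  U : Fin n → Set X
  opn : ∀ i, IsOpen (U i)
  cov : ⋃ i, U i = Set.univ

/-- The member `⋂_{i<n} T^{-i} U_{σ(i)}` of the dynamical refinement of a cover. -/
def dynSet (T : X → X) {m : ℕ} (U : Fin m → Set X) (n : ℕ) (σ : Fin n → Fin m) : Set X :=
  ⋂ i : Fin n, T^[(i : ℕ)] ⁻¹' U (σ i)

/-- Minimal cardinality of a subfamily of `V` covering `S`. -/
noncomputable def coverNum {α : Type*} [Fintype α] (V : α → Set X) (S : Set X) : ℕ :=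
  sInf {k | ∃ t : Finset α, t.card = k ∧ S ⊆ ⋃ i ∈ t, V i}

/-- The local classical topological entropy `h(T,𝒰)` of an open cover. -/
noncomputable def covLocEnt [TopologicalSpace X] (T : X → X) (C : FinOpenCover X) : ℝ :=
  Filter.atTop.limsup fun n : ℕ =>
    Real.log ((coverNum (fun σ : Fin n → Fin C.n => dynSet T C.U n σ) Set.univ : ℕ) : ℝ) / (n : ℝ)

/-- The classical topological entropy `h_top(T)` via open covers. -/
noncomputable def topEntCov [TopologicalSpace X] (T : X → X) : EReal :=
  ⨆ C : FinOpenCover X, ((covLocEnt T C : ℝ) : EReal)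

/-! ### Misiurewicz topological tail entropy -/

/-- The local conditional topological entropy `h(𝒰|𝒱)` of two open covers. -/
noncomputable def misCondLoc [TopologicalSpace X] (T : X → X) (CU CV : FinOpenCover X) : ℝ :=
  Filter.atTop.limsup fun n : ℕ =>
    Real.log (((⨆ τ : Fin n → Fin CV.n,
      coverNum (fun σ : Fin n → Fin CU.n => dynSet T CU.U n σ) (dynSet T CV.U n τ) : ℕ)) : ℝ) / (n : ℝ)

/-- The conditional topological entropy `h(T|𝒱) = sup_𝒰 h(𝒰|𝒱)`. -/
noncomputable def misCond [TopologicalSpace X] (T : X → X) (CV : FinOpenCover X) : EReal :=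
  ⨆ CU : FinOpenCover X, ((misCondLoc T CU CV : ℝ) : EReal)

/-- Misiurewicz's topological tail entropy `h*(T) = inf_𝒱 h(T|𝒱)`. -/
noncomputable def misTail [TopologicalSpace X] (T : X → X) : EReal :=
  ⨅ CV : FinOpenCover X, misCond T CV

/-! ### Topological tail entropy via partitions of unity -/

/-- `H̃(Φ|ψ) = Σ_φ sup_{supp ψ} φ`. -/
noncomputable def condTopStatPU [TopologicalSpace X] (Φ : PartUnity X) (ψ : X → ℝ) : ℝ :=
  ∑ i, ⨆ x ∈ tsupport ψ, Φ.f i x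

/-- The weight set `D(Ψ) = {a : inf ψ ≤ a_ψ ≤ sup ψ, Σ a_ψ = 1}`. -/
def weights (Ψ : PartUnity X) : Set (Fin Ψ.n → ℝ) :=
  {a | (∀ j, (⨅ x, Ψ.f j x) ≤ a j ∧ a j ≤ ⨆ x, Ψ.f j x) ∧ ∑ j, a j = 1}

/-- `H̃_n(Φ|Ψ) = sup_{a ∈ D(Ψ₀ⁿ⁻¹)} Σ_ψ a_ψ H̃(Φ₀ⁿ⁻¹|ψ)`. -/
noncomputable def tailStat [TopologicalSpace X] (T : X → X) (Φ Ψ : PartUnity X) (n : ℕ) : ℝ :=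
  sSup {r | ∃ a ∈ weights (PartUnity.dyn T Ψ n),
    r = ∑ j, a j * condTopStatPU (PartUnity.dyn T Φ n) ((PartUnity.dyn T Ψ n).f j)}

/-- The local conditional topological entropy `h̃(Φ|Ψ) = limsup_n (1/n) log H̃_n(Φ|Ψ)`. -/
noncomputable def tailLoc [TopologicalSpace X] (T : X → X) (Φ Ψ : PartUnity X) : ℝ :=
  Filter.atTop.limsup fun n : ℕ => Real.log (tailStat T Φ Ψ n) / (n : ℝ)

/-- The conditional topological entropy `h̃(T|Ψ) = sup_Φ h̃(Φ|Ψ)` over continuous `Φ`. -/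
noncomputable def condTopEntPU [TopologicalSpace X] (T : X → X) (Ψ : PartUnity X) : EReal :=
  ⨆ Φ : {Φ : PartUnity X // Φ.Cont}, ((tailLoc T Φ.1 Ψ : ℝ) : EReal)

/-- The topological tail entropy `h̃*(T) = inf_Ψ h̃(T|Ψ)` over continuous `Ψ`. -/
noncomputable def tailEntPU [TopologicalSpace X] (T : X → X) : EReal :=
  ⨅ Ψ : {Ψ : PartUnity X // Ψ.Cont}, condTopEntPU T Ψ.1

/-! ### Pressures -/

/-- The Birkhoff sum `S_n g = Σ_{i<n} g ∘ Tⁱ`. -/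
def birkhoff (T : X → X) (g : X → ℝ) (n : ℕ) (x : X) : ℝ :=
  ∑ i ∈ Finset.range n, g (T^[i] x)

/-- The static pressure `P̃(T,g,Φ,n) = Σ_{φ ∈ Φ₀ⁿ⁻¹} sup (φ e^{S_n g})`. -/
noncomputable def puPressStat (T : X → X) (g : X → ℝ) (Φ : PartUnity X) (n : ℕ) : ℝ :=
  ∑ i, ⨆ x, (PartUnity.dyn T Φ n).f i x * Real.exp (birkhoff T g n x)

/-- The local topological pressure `P̃_top(T,g,Φ) = lim_n (1/n) log P̃(T,g,Φ,n)`. -/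
noncomputable def puLocPress (T : X → X) (g : X → ℝ) (Φ : PartUnity X) : ℝ :=
  Filter.atTop.limsup fun n : ℕ => Real.log (puPressStat T g Φ n) / (n : ℝ)

/-- The topological pressure `P̃_top(T,g)` via continuous partitions of unity. -/
noncomputable def puTopPress [TopologicalSpace X] (T : X → X) (g : X → ℝ) : EReal :=
  ⨆ Φ : {Φ : PartUnity X // Φ.Cont}, ((puLocPress T g Φ.1 : ℝ) : EReal)

/-- The classical static pressure of an open cover:
`inf { Σ_{V ∈ 𝒱} sup_V e^{S_n g} : 𝒱 a subcover of 𝒰₀ⁿ⁻¹ }`. -/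
noncomputable def covPressStat [TopologicalSpace X] (T : X → X) (g : X → ℝ)
    (C : FinOpenCover X) (n : ℕ) : ℝ :=
  sInf {r | ∃ t : Finset (Fin n → Fin C.n),
    (Set.univ ⊆ ⋃ σ ∈ t, dynSet T C.U n σ) ∧
    r = ∑ σ ∈ t, ⨆ x ∈ dynSet T C.U n σ, Real.exp (birkhoff T g n x)}

/-- The local classical topological pressure of an open cover. -/
noncomputable def covLocPress [TopologicalSpace X] (T : X → X) (g : X → ℝ)
    (C : FinOpenCover X) : ℝ :=
  Filter.atTop.limsup fun n : ℕ => Real.log (covPressStat T g C n) / (n : ℝ)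

/-- The classical topological pressure `P_top(T,g)` via open covers. -/
noncomputable def topPress [TopologicalSpace X] (T : X → X) (g : X → ℝ) : EReal :=
  ⨆ C : FinOpenCover X, ((covLocPress T g C : ℝ) : EReal)

/-! ### Topological tail pressure -/

/-- `P̃_n(T,g,Φ|Ψ) = sup_{a ∈ D(Ψ₀ⁿ⁻¹)} Σ_ψ a_ψ Σ_φ sup_{supp ψ} (φ e^{S_n g})`. -/
noncomputable def tailPressStat [TopologicalSpace X] (T : X → X) (g : X → ℝ)
    (Φ Ψ : PartUnity X) (n : ℕ) : ℝ :=
  sSup {r | ∃ a ∈ weights (PartUnity.dyn T Ψ n),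
    r = ∑ j, a j * ∑ i, ⨆ x ∈ tsupport ((PartUnity.dyn T Ψ n).f j),
      (PartUnity.dyn T Φ n).f i x * Real.exp (birkhoff T g n x)}

/-- The local topological tail pressure `P̃(T,g,Φ|Ψ) = limsup_n (1/n) log P̃_n(T,g,Φ|Ψ)`. -/
noncomputable def tailLocPress [TopologicalSpace X] (T : X → X) (g : X → ℝ)
    (Φ Ψ : PartUnity X) : ℝ :=
  Filter.atTop.limsup fun n : ℕ => Real.log (tailPressStat T g Φ Ψ n) / (n : ℝ)

/-- The conditional topological pressure `P̃(T,g|Ψ) = sup_Φ P̃(T,g,Φ|Ψ)` over continuous `Φ`. -/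
noncomputable def condTopPressPU [TopologicalSpace X] (T : X → X) (g : X → ℝ)
    (Ψ : PartUnity X) : EReal :=
  ⨆ Φ : {Φ : PartUnity X // Φ.Cont}, ((tailLocPress T g Φ.1 Ψ : ℝ) : EReal)

/-- The topological tail pressure `P̃*(T,g) = inf_Ψ P̃(T,g|Ψ)` over continuous `Ψ`. -/
noncomputable def puTailPress [TopologicalSpace X] (T : X → X) (g : X → ℝ) : EReal :=
  ⨅ Ψ : {Ψ : PartUnity X // Ψ.Cont}, condTopPressPU T g Ψ.1

/-! ### Classical topological tail pressure (Li–Chen–Cheng) -/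

/-- The Bowen ball `B(x,ε,n) = {y : d(Tⁱx,Tⁱy) < ε for all 0 ≤ i < n}`. -/
def bowenBall [PseudoMetricSpace X] (T : X → X) (x : X) (ε : ℝ) (n : ℕ) : Set X :=
  {y | ∀ i < n, dist (T^[i] x) (T^[i] y) < ε}

/-- `E` is `(n,δ)`-separated: distinct points `y,z ∈ E` satisfy `d(Tⁱy,Tⁱz) > δ`
for some `0 ≤ i < n`. -/
def IsSep [PseudoMetricSpace X] (T : X → X) (n : ℕ) (δ : ℝ) (E : Finset X) : Prop :=
  ∀ y ∈ E, ∀ z ∈ E, y ≠ z → ∃ i < n, δ < dist (T^[i] y) (T^[i] z)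

/-- `P_n(T,g,δ,ε) = sup_x sup { Σ_{y∈E} e^{S_n g(y)} : E (n,δ)-separated ⊆ B(x,ε,n) }`. -/
noncomputable def sepPress [PseudoMetricSpace X] (T : X → X) (g : X → ℝ)
    (n : ℕ) (δ ε : ℝ) : ℝ :=
  ⨆ x : X, sSup {r | ∃ E : Finset X, ↑E ⊆ bowenBall T x ε n ∧ IsSep T n δ E ∧
    r = ∑ y ∈ E, Real.exp (birkhoff T g n y)}

/-- The classical topological tail pressure
`P*(T,g) = lim_{ε→0} lim_{δ→0} limsup_n (1/n) log P_n(T,g,δ,ε)`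
(the inner limits are monotone, hence given by `inf_ε sup_δ`). -/
noncomputable def tailPress [PseudoMetricSpace X] (T : X → X) (g : X → ℝ) : EReal :=
  ⨅ ε : {ε : ℝ // 0 < ε}, ⨆ δ : {δ : ℝ // 0 < δ},
    Filter.atTop.limsup fun n : ℕ => ((Real.log (sepPress T g n δ.1 ε.1) / (n : ℝ) : ℝ) : EReal)

/-!
For a probability measure `μ` and measurable partitions of unity `P`, `Q`,
`H̃_μ(P) ≤ H̃_μ(Q) + Σ_q μ(q) log H̃(P|q) ≤ H̃_μ(Q) + log sup_{a ∈ D(Q)} Σ_q a_q H̃(P|q)`.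
The first inequality splits each `φ ∈ P` as `Σ_q φ q` and combines Jensen's inequality for the
convex function `t ↦ t log t` with the log-sum inequality; the second is concavity of `log`,
the weights `a_q = μ(q)` being admissible. For `P = Φ₀ⁿ⁻¹`, `Q = Ψ₀ⁿ⁻¹` all terms are `O(n)`,
so dividing by `n` and passing to the limsup gives `h̃_μ(T,Φ) ≤ h̃_μ(T,Ψ) + h̃(Φ|Ψ)`, and the
theorem follows by taking the supremum over `Φ`.
-/

open Real

section RealInequalities

/-- The tangent line of `t ↦ t log t` at `m` lies below its graph. -/
theorem mul_log_add_sub_le_mul_log {t m : ℝ} (ht : 0 ≤ t) (hm : 0 < m) :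
    t * log m + (t - m) ≤ t * log t := by
  rcases ht.eq_or_lt with rfl | ht
  · simpa using hm.le
  · have h := mul_le_mul_of_nonneg_left (log_le_sub_one_of_pos (div_pos hm ht)) ht.le
    rw [log_div hm.ne' ht.ne', mul_sub, mul_sub, mul_div_cancel₀ _ ht.ne', mul_one] at h
    linarith

theorem mul_log_le_mul_log_of_le {p c : ℝ} (hp : 0 ≤ p) (hpc : p ≤ c) :
    p * log p ≤ p * log c := by
  rcases hp.eq_or_lt with rfl | hp
  · simp
  · exact mul_le_mul_of_nonneg_left (log_le_log hp hpc) hp.le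

theorem abs_mul_log_le_one {x : ℝ} (h0 : 0 ≤ x) (h1 : x ≤ 1) : |x * log x| ≤ 1 := by
  rw [abs_of_nonpos (mul_log_nonpos h0 h1)]
  linarith [self_sub_one_le_mul_log h0]

/-- The log-sum inequality. -/
theorem sum_neg_mul_log_add_mul_log_le {ι : Type*} (s : Finset ι) {p c : ι → ℝ}
    (hp : ∀ i, 0 ≤ p i) (hc : ∀ i, 0 ≤ c i) (hpc : ∀ i, 0 < p i → 0 < c i) :
    ∑ i ∈ s, (-(p i * log (p i)) + p i * log (c i)) ≤
      -((∑ i ∈ s, p i) * log (∑ i ∈ s, p i)) + (∑ i ∈ s, p i) * log (∑ i ∈ s, c i) := by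
  set P := ∑ i ∈ s, p i
  set C := ∑ i ∈ s, c i
  rcases (Finset.sum_nonneg fun i _ => hp i : 0 ≤ P).eq_or_lt with hP | hP
  · have hp0 : ∀ i ∈ s, p i = 0 :=
      (Finset.sum_eq_zero_iff_of_nonneg fun i _ => hp i).1 hP.symm
    rw [show P = 0 from hP.symm, Finset.sum_eq_zero fun i hi => by rw [hp0 i hi]; ring]
    simp
  obtain ⟨k, hks, hk⟩ := Finset.exists_lt_of_sum_lt (by simpa using hP : ∑ _i ∈ s, (0 : ℝ) < P)
  have hC : 0 < C := (hpc k hk).trans_le (Finset.single_le_sum (fun i _ => hc i) hks)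
  have hterm : ∀ i ∈ s, -(p i * log (p i)) + p i * log (c i) ≤
      p i * log C - p i * log P + (c i * P / C - p i) := by
    intro i _
    rcases (hp i).eq_or_lt with h0 | h0
    · rw [← h0]
      simpa using div_nonneg (mul_nonneg (hc i) hP.le) hC.le
    · have hci := hpc i h0
      have h := mul_log_add_sub_le_mul_log (hp i) (div_pos (mul_pos hci hP) hC)
      rw [log_div (mul_pos hci hP).ne' hC.ne', log_mul hci.ne' hP.ne'] at h
      linarith
  refine (Finset.sum_le_sum hterm).trans_eq ?_
  rw [Finset.sum_add_distrib, Finset.sum_sub_distrib, Finset.sum_sub_distrib, ← Finset.sum_mul,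
    ← Finset.sum_mul, ← Finset.sum_div, ← Finset.sum_mul, mul_div_cancel_left₀ _ hC.ne']
  ring

end RealInequalities

namespace PartUnity

theorem dyn_n (T : X → X) (Φ : PartUnity X) : ∀ n, (dyn T Φ n).n = Φ.n ^ n
  | 0 => rfl
  | n + 1 => by rw [pow_succ', ← dyn_n T Φ n]; rfl

theorem abs_le_one (Φ : PartUnity X) (i : Fin Φ.n) (x : X) : |Φ.f i x| ≤ 1 :=
  abs_le.2 ⟨by linarith [Φ.nonneg i x], Φ.le_one i x⟩

theorem biSup_nonneg (Φ : PartUnity X) (i : Fin Φ.n) (S : Set X) : 0 ≤ ⨆ y ∈ S, Φ.f i y :=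
  Real.iSup_nonneg fun y => Real.iSup_nonneg fun _ => Φ.nonneg i y

theorem biSup_le_one (Φ : PartUnity X) (i : Fin Φ.n) (S : Set X) : ⨆ y ∈ S, Φ.f i y ≤ 1 :=
  Real.iSup_le (fun y => Real.iSup_le (fun _ => Φ.le_one i y) zero_le_one) zero_le_one

theorem le_biSup (Φ : PartUnity X) (i : Fin Φ.n) {S : Set X} {x : X} (hx : x ∈ S) :
    Φ.f i x ≤ ⨆ y ∈ S, Φ.f i y := by
  have hbdd : BddAbove (range fun y => ⨆ _ : y ∈ S, Φ.f i y) :=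
    ⟨1, by rintro _ ⟨y, rfl⟩; exact Real.iSup_le (fun _ => Φ.le_one i y) zero_le_one⟩
  exact (ciSup_pos (f := fun _ : x ∈ S => Φ.f i x) hx).symm.trans_le (le_ciSup hbdd x)

theorem le_biSup_tsupport [TopologicalSpace X] (Φ : PartUnity X) (i : Fin Φ.n) {ψ : X → ℝ}
    {x : X} (hx : ψ x ≠ 0) : Φ.f i x ≤ ⨆ y ∈ tsupport ψ, Φ.f i y :=
  Φ.le_biSup i (subset_tsupport ψ hx)

section Measurability

variable [MeasurableSpace X] [MeasurableSpace Y]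

theorem Meas.join {Φ Ψ : PartUnity X} (hΦ : Φ.Meas) (hΨ : Ψ.Meas) : (Φ.join Ψ).Meas :=
  fun _ => (hΦ _).mul (hΨ _)

theorem Meas.comp {Φ : PartUnity X} (hΦ : Φ.Meas) {T : Y → X} (hT : Measurable T) :
    (Φ.comp T).Meas :=
  fun i => (hΦ i).comp hT

theorem meas_triv : (triv X).Meas := fun _ => measurable_const

theorem Meas.dyn {Φ : PartUnity X} (hΦ : Φ.Meas) {T : X → X} (hT : Measurable T) :
    ∀ n, (dyn T Φ n).Meas
  | 0 => meas_triv
  | n + 1 => hΦ.join ((hΦ.dyn hT n).comp hT)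

theorem Cont.meas [TopologicalSpace X] [OpensMeasurableSpace X] {Φ : PartUnity X}
    (hΦ : Φ.Cont) : Φ.Meas :=
  fun i => (hΦ i).measurable

end Measurability

end PartUnity

section CondTopStatPU

variable [TopologicalSpace X]

theorem condTopStatPU_nonneg (P : PartUnity X) (ψ : X → ℝ) : 0 ≤ condTopStatPU P ψ :=
  Finset.sum_nonneg fun i _ => P.biSup_nonneg i _

theorem condTopStatPU_le (P : PartUnity X) (ψ : X → ℝ) : condTopStatPU P ψ ≤ P.n := by
  refine (Finset.sum_le_sum fun i _ => P.biSup_le_one i (tsupport ψ)).trans_eq ?_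
  simp

theorem self_le_mul_condTopStatPU (P : PartUnity X) {ψ : X → ℝ} {x : X} (hψ : 0 ≤ ψ x) :
    ψ x ≤ ψ x * condTopStatPU P ψ := by
  rcases hψ.eq_or_lt with h | h
  · rw [← h, zero_mul]
  · refine le_mul_of_one_le_right hψ ?_
    calc (1 : ℝ) = ∑ i, P.f i x := (P.sum_one x).symm
      _ ≤ condTopStatPU P ψ := Finset.sum_le_sum fun i _ => P.le_biSup_tsupport i h.ne'

end CondTopStatPU

section Integrals

variable [MeasurableSpace X] {μ : Measure X}

theorem MeasureTheory.Integrable.mul_of_abs_le_one {f g : X → ℝ} (hf : Integrable f μ)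
    (hg : Measurable g) (hg1 : ∀ x, |g x| ≤ 1) : Integrable (fun x => f x * g x) μ :=
  hf.mul_bdd hg.aestronglyMeasurable (ae_of_all _ fun x => (Real.norm_eq_abs _).trans_le (hg1 x))

theorem integrable_of_abs_le_one [IsFiniteMeasure μ] {g : X → ℝ} (hg : Measurable g)
    (hg1 : ∀ x, |g x| ≤ 1) : Integrable g μ :=
  Integrable.of_bound hg.aestronglyMeasurable 1
    (ae_of_all _ fun x => (Real.norm_eq_abs _).trans_le (hg1 x))

/-- Jensen's inequality for `t ↦ t log t` and the measure `φ μ`, multiplied out by `∫ φ`. -/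
theorem mul_log_integral_sub_le_integral_mul_log {φ ψ : X → ℝ} (hφ : Integrable φ μ)
    (hφ0 : ∀ x, 0 ≤ φ x) (hψ : Measurable ψ) (hψ0 : ∀ x, 0 ≤ ψ x) (hψ1 : ∀ x, ψ x ≤ 1) :
    (∫ x, φ x * ψ x ∂μ) * log (∫ x, φ x * ψ x ∂μ) - (∫ x, φ x * ψ x ∂μ) * log (∫ x, φ x ∂μ) ≤
      ∫ x, φ x * (ψ x * log (ψ x)) ∂μ := by
  have hφψ : Integrable (fun x => φ x * ψ x) μ :=
    hφ.mul_of_abs_le_one hψ fun x => abs_le.2 ⟨by linarith [hψ0 x], hψ1 x⟩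
  have hφψlog : Integrable (fun x => φ x * (ψ x * log (ψ x))) μ :=
    hφ.mul_of_abs_le_one (hψ.mul hψ.log) fun x => abs_mul_log_le_one (hψ0 x) (hψ1 x)
  have hφψ0 : ∀ x, 0 ≤ φ x * ψ x := fun x => mul_nonneg (hφ0 x) (hψ0 x)
  rcases (integral_nonneg (μ := μ) (f := fun x => φ x * ψ x) hφψ0).eq_or_lt with hA | hA
  · have hzero : (fun x => φ x * ψ x) =ᵐ[μ] 0 :=
      (integral_eq_zero_iff_of_nonneg hφψ0 hφψ).1 hA.symm
    have hrhs : ∫ x, φ x * (ψ x * log (ψ x)) ∂μ = 0 := integral_eq_zero_of_ae (hzero.mono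
      fun x hx => show φ x * (ψ x * log (ψ x)) = 0 by
        rw [← mul_assoc, show φ x * ψ x = 0 from hx, zero_mul])
    simp [← hA, hrhs]
  have hB : 0 < ∫ x, φ x ∂μ :=
    hA.trans_le (integral_mono hφψ hφ fun x => mul_le_of_le_one_right (hφ0 x) (hψ1 x))
  set A := ∫ x, φ x * ψ x ∂μ
  set B := ∫ x, φ x ∂μ
  have hm : 0 < A / B := div_pos hA hB
  calc A * log A - A * log B = ∫ x, (φ x * ψ x * (log (A / B) + 1) - A / B * φ x) ∂μ := by
        rw [integral_sub (hφψ.mul_const _) (hφ.const_mul _), integral_mul_const,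
          integral_const_mul, log_div hA.ne' hB.ne']
        field_simp
        ring
    _ ≤ ∫ x, φ x * (ψ x * log (ψ x)) ∂μ := by
        refine integral_mono ((hφψ.mul_const _).sub (hφ.const_mul _)) hφψlog fun x => ?_
        have := mul_le_mul_of_nonneg_left (mul_log_add_sub_le_mul_log (hψ0 x) hm) (hφ0 x)
        linarith

namespace PartUnity

theorem integrable [IsFiniteMeasure μ] {P : PartUnity X} (hP : P.Meas) (i : Fin P.n) :
    Integrable (P.f i) μ :=
  integrable_of_abs_le_one (hP i) (P.abs_le_one i)

theorem integrable_mul_log [IsFiniteMeasure μ] {P : PartUnity X} (hP : P.Meas) (i : Fin P.n) :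
    Integrable (fun x => P.f i x * log (P.f i x)) μ :=
  integrable_of_abs_le_one ((hP i).mul (hP i).log) fun x =>
    abs_mul_log_le_one (P.nonneg i x) (P.le_one i x)

theorem integral_eq_sum_integral_mul {Q : PartUnity X} (hQ : Q.Meas) {f : X → ℝ}
    (hf : Integrable f μ) : ∫ x, f x ∂μ = ∑ j, ∫ x, f x * Q.f j x ∂μ := by
  rw [← integral_finsetSum _ fun j _ => hf.mul_of_abs_le_one (hQ j) (Q.abs_le_one j)]
  simp_rw [← Finset.mul_sum, Q.sum_one, mul_one]

theorem integral_eq_sum_integral_mul' {Q : PartUnity X} (hQ : Q.Meas) {f : X → ℝ}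
    (hf : Integrable f μ) : ∫ x, f x ∂μ = ∑ j, ∫ x, Q.f j x * f x ∂μ := by
  simp_rw [mul_comm (Q.f _ _)]
  exact integral_eq_sum_integral_mul hQ hf

theorem sum_integral [IsProbabilityMeasure μ] {P : PartUnity X} (hP : P.Meas) :
    ∑ i, ∫ x, P.f i x ∂μ = 1 := by
  rw [← integral_finsetSum _ fun i _ => P.integrable hP i]
  simp [P.sum_one]

end PartUnity

end Integrals

section StaticEntropy

variable [MeasurableSpace X] {μ : Measure X}

theorem statEnt_nonneg [IsProbabilityMeasure μ] {P : PartUnity X} (hP : P.Meas) :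
    0 ≤ statEnt μ P := by
  refine Finset.sum_nonneg fun i _ => ?_
  have h := mul_log_integral_sub_le_integral_mul_log (integrable_const (1 : ℝ) (μ := μ))
    (fun _ => zero_le_one) (hP i) (P.nonneg i) (P.le_one i)
  simp only [one_mul, integral_const, probReal_univ, smul_eq_mul, mul_one, log_one, mul_zero,
    sub_zero] at h
  linarith

theorem statEnt_le_log_n [IsProbabilityMeasure μ] {P : PartUnity X} (hP : P.Meas) :
    statEnt μ P ≤ log P.n := by
  have h := sum_neg_mul_log_add_mul_log_le Finset.univ (p := fun i => ∫ x, P.f i x ∂μ)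
    (c := fun _ => 1) (fun i => integral_nonneg (P.nonneg i)) (fun _ => zero_le_one)
    (fun _ _ => one_pos)
  simp only [P.sum_integral hP, log_one, mul_zero, add_zero, neg_zero, zero_add, one_mul,
    Finset.sum_const, Finset.card_univ, Fintype.card_fin, nsmul_eq_mul, mul_one] at h
  refine (Finset.sum_le_sum fun i _ => ?_).trans h
  have := integral_nonpos (μ := μ) fun x => mul_log_nonpos (P.nonneg i x) (P.le_one i x)
  linarith

variable [TopologicalSpace X] [IsFiniteMeasure μ] {P Q : PartUnity X}

/-- Splitting `φ = Σ_q φ q`: Jensen's inequality for each `q`, and `φ ≤ sup_{supp q} φ` on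
`supp q`. -/
theorem neg_mul_log_integral_add_integral_mul_log_le (hP : P.Meas) (hQ : Q.Meas) (i : Fin P.n) :
    -((∫ x, P.f i x ∂μ) * log (∫ x, P.f i x ∂μ)) + ∫ x, P.f i x * log (P.f i x) ∂μ ≤
      ∑ j, (-((∫ x, P.f i x * Q.f j x ∂μ) * log (∫ x, P.f i x * Q.f j x ∂μ)) +
        (∫ x, P.f i x * Q.f j x ∂μ) * log (⨆ y ∈ tsupport (Q.f j), P.f i y) +
        ∫ x, P.f i x * (Q.f j x * log (Q.f j x)) ∂μ) := by
  have hjensen := Finset.sum_le_sum fun j (_ : j ∈ Finset.univ) =>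
    mul_log_integral_sub_le_integral_mul_log (P.integrable (μ := μ) hP i) (P.nonneg i) (hQ j)
      (Q.nonneg j) (Q.le_one j)
  rw [Finset.sum_sub_distrib, ← Finset.sum_mul,
    ← PartUnity.integral_eq_sum_integral_mul hQ (P.integrable hP i)] at hjensen
  have hsup : ∀ j, ∫ x, P.f i x * log (P.f i x) * Q.f j x ∂μ ≤
      (∫ x, P.f i x * Q.f j x ∂μ) * log (⨆ y ∈ tsupport (Q.f j), P.f i y) := by
    intro j
    rw [← integral_mul_const]
    refine integral_mono ((P.integrable_mul_log hP i).mul_of_abs_le_one (hQ j) (Q.abs_le_one j))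
      (((P.integrable hP i).mul_of_abs_le_one (hQ j) (Q.abs_le_one j)).mul_const _) fun x => ?_
    rcases eq_or_ne (Q.f j x) 0 with h | h
    · simp [h]
    · have := mul_le_mul_of_nonneg_right
        (mul_log_le_mul_log_of_le (P.nonneg i x) (P.le_biSup_tsupport i h)) (Q.nonneg j x)
      linarith
  rw [PartUnity.integral_eq_sum_integral_mul hQ (P.integrable_mul_log hP i)]
  simp only [Finset.sum_add_distrib, Finset.sum_neg_distrib]
  linarith [Finset.sum_le_sum fun j (_ : j ∈ Finset.univ) => hsup j]

/-- The log-sum inequality over `φ ∈ P`, for fixed `q`. -/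
theorem sum_neg_mul_log_integral_add_le (hP : P.Meas) (hQ : Q.Meas) (j : Fin Q.n) :
    ∑ i, (-((∫ x, P.f i x * Q.f j x ∂μ) * log (∫ x, P.f i x * Q.f j x ∂μ)) +
        (∫ x, P.f i x * Q.f j x ∂μ) * log (⨆ y ∈ tsupport (Q.f j), P.f i y) +
        ∫ x, P.f i x * (Q.f j x * log (Q.f j x)) ∂μ) ≤
      -((∫ x, Q.f j x ∂μ) * log (∫ x, Q.f j x ∂μ)) + ∫ x, Q.f j x * log (Q.f j x) ∂μ +
        (∫ x, Q.f j x ∂μ) * log (condTopStatPU P (Q.f j)) := by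
  have hmass : ∀ i, ∫ x, P.f i x * Q.f j x ∂μ ≤
      (⨆ y ∈ tsupport (Q.f j), P.f i y) * ∫ x, Q.f j x ∂μ := by
    intro i
    rw [← integral_const_mul]
    refine integral_mono ((P.integrable hP i).mul_of_abs_le_one (hQ j) (Q.abs_le_one j))
      ((Q.integrable hQ j).const_mul _) fun x => ?_
    rcases eq_or_ne (Q.f j x) 0 with h | h
    · simp [h]
    · exact mul_le_mul_of_nonneg_right (P.le_biSup_tsupport i h) (Q.nonneg j x)
  have hgibbs := sum_neg_mul_log_add_mul_log_le Finset.univ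
    (p := fun i => ∫ x, P.f i x * Q.f j x ∂μ) (c := fun i => ⨆ y ∈ tsupport (Q.f j), P.f i y)
    (fun i => integral_nonneg fun x => mul_nonneg (P.nonneg i x) (Q.nonneg j x))
    (fun i => P.biSup_nonneg i _)
    (fun i hi => pos_of_mul_pos_left (hi.trans_le (hmass i)) (integral_nonneg (Q.nonneg j)))
  rw [← PartUnity.integral_eq_sum_integral_mul' hP (Q.integrable hQ j)] at hgibbs
  rw [Finset.sum_add_distrib, ← PartUnity.integral_eq_sum_integral_mul' hP
    (Q.integrable_mul_log hQ j)]
  unfold condTopStatPU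
  linarith

theorem statEnt_le_statEnt_add_sum_mul_log_condTopStatPU (hP : P.Meas) (hQ : Q.Meas) :
    statEnt μ P ≤ statEnt μ Q + ∑ j, (∫ x, Q.f j x ∂μ) * log (condTopStatPU P (Q.f j)) :=
  calc statEnt μ P
      ≤ ∑ i, ∑ j, (-((∫ x, P.f i x * Q.f j x ∂μ) * log (∫ x, P.f i x * Q.f j x ∂μ)) +
          (∫ x, P.f i x * Q.f j x ∂μ) * log (⨆ y ∈ tsupport (Q.f j), P.f i y) +
          ∫ x, P.f i x * (Q.f j x * log (Q.f j x)) ∂μ) :=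
        Finset.sum_le_sum fun i _ => neg_mul_log_integral_add_integral_mul_log_le hP hQ i
    _ = ∑ j, ∑ i, (-((∫ x, P.f i x * Q.f j x ∂μ) * log (∫ x, P.f i x * Q.f j x ∂μ)) +
          (∫ x, P.f i x * Q.f j x ∂μ) * log (⨆ y ∈ tsupport (Q.f j), P.f i y) +
          ∫ x, P.f i x * (Q.f j x * log (Q.f j x)) ∂μ) := Finset.sum_comm
    _ ≤ ∑ j, (-((∫ x, Q.f j x ∂μ) * log (∫ x, Q.f j x ∂μ)) + ∫ x, Q.f j x * log (Q.f j x) ∂μ +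
          (∫ x, Q.f j x ∂μ) * log (condTopStatPU P (Q.f j))) :=
        Finset.sum_le_sum fun j _ => sum_neg_mul_log_integral_add_le hP hQ j
    _ = _ := Finset.sum_add_distrib

end StaticEntropy

section Weights

variable {Q : PartUnity X}

theorem nonneg_of_mem_weights {a : Fin Q.n → ℝ} (ha : a ∈ weights Q) (j : Fin Q.n) : 0 ≤ a j :=
  (Real.iInf_nonneg (Q.nonneg j)).trans (ha.1 j).1

theorem apply_mem_weights (Q : PartUnity X) (x : X) : (fun j => Q.f j x) ∈ weights Q :=
  ⟨fun j => ⟨ciInf_le ⟨0, by rintro _ ⟨y, rfl⟩; exact Q.nonneg j y⟩ x,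
    le_ciSup ⟨1, by rintro _ ⟨y, rfl⟩; exact Q.le_one j y⟩ x⟩, Q.sum_one x⟩

variable [MeasurableSpace X] {μ : Measure X} [IsProbabilityMeasure μ]

theorem integral_mem_weights (hQ : Q.Meas) : (fun j => ∫ x, Q.f j x ∂μ) ∈ weights Q := by
  refine ⟨fun j => ⟨?_, ?_⟩, Q.sum_integral hQ⟩
  · have hbdd : BddBelow (range (Q.f j)) := ⟨0, by rintro _ ⟨x, rfl⟩; exact Q.nonneg j x⟩
    simpa using integral_mono (μ := μ) (integrable_const _) (Q.integrable hQ j)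
      fun x => ciInf_le hbdd x
  · have hbdd : BddAbove (range (Q.f j)) := ⟨1, by rintro _ ⟨x, rfl⟩; exact Q.le_one j x⟩
    simpa using integral_mono (μ := μ) (Q.integrable hQ j) (integrable_const _)
      fun x => le_ciSup hbdd x

end Weights

section CondTopStat

variable [TopologicalSpace X] {P Q : PartUnity X}

/-- `H̃(P|Q) = sup_{a ∈ D(Q)} Σ_q a_q H̃(P|q)`; thus `H̃_n(Φ|Ψ)` is `H̃(Φ₀ⁿ⁻¹|Ψ₀ⁿ⁻¹)`. -/
noncomputable def condTopStat (P Q : PartUnity X) : ℝ :=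
  sSup {r | ∃ a ∈ weights Q, r = ∑ j, a j * condTopStatPU P (Q.f j)}

theorem tailStat_eq_condTopStat (T : X → X) (Φ Ψ : PartUnity X) (n : ℕ) :
    tailStat T Φ Ψ n = condTopStat (Φ.dyn T n) (Ψ.dyn T n) :=
  rfl

theorem sum_mul_condTopStatPU_le {a : Fin Q.n → ℝ} (ha : a ∈ weights Q) :
    ∑ j, a j * condTopStatPU P (Q.f j) ≤ P.n :=
  calc ∑ j, a j * condTopStatPU P (Q.f j) ≤ ∑ j, a j * P.n :=
        Finset.sum_le_sum fun j _ =>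
          mul_le_mul_of_nonneg_left (condTopStatPU_le P _) (nonneg_of_mem_weights ha j)
    _ = P.n := by rw [← Finset.sum_mul, ha.2, one_mul]

theorem condTopStat_le (P Q : PartUnity X) : condTopStat P Q ≤ P.n :=
  Real.sSup_le (by rintro _ ⟨a, ha, rfl⟩; exact sum_mul_condTopStatPU_le ha) (Nat.cast_nonneg _)

theorem sum_mul_condTopStatPU_le_condTopStat {a : Fin Q.n → ℝ} (ha : a ∈ weights Q) :
    ∑ j, a j * condTopStatPU P (Q.f j) ≤ condTopStat P Q :=
  le_csSup ⟨P.n, by rintro _ ⟨b, hb, rfl⟩; exact sum_mul_condTopStatPU_le hb⟩ ⟨a, ha, rfl⟩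

theorem one_le_condTopStat [Nonempty X] (P Q : PartUnity X) : 1 ≤ condTopStat P Q := by
  let x := Classical.arbitrary X
  calc 1 = ∑ j, Q.f j x := (Q.sum_one x).symm
    _ ≤ ∑ j, Q.f j x * condTopStatPU P (Q.f j) :=
        Finset.sum_le_sum fun j _ => self_le_mul_condTopStatPU P (Q.nonneg j x)
    _ ≤ condTopStat P Q := sum_mul_condTopStatPU_le_condTopStat (apply_mem_weights Q x)

variable [MeasurableSpace X] {μ : Measure X}

theorem integral_le_integral_mul_condTopStatPU [IsFiniteMeasure μ] (P : PartUnity X)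
    (hQ : Q.Meas) (j : Fin Q.n) :
    ∫ x, Q.f j x ∂μ ≤ (∫ x, Q.f j x ∂μ) * condTopStatPU P (Q.f j) := by
  rw [← integral_mul_const]
  exact integral_mono (Q.integrable hQ j) ((Q.integrable hQ j).mul_const _) fun x =>
    self_le_mul_condTopStatPU P (Q.nonneg j x)

variable [IsProbabilityMeasure μ]

theorem one_le_sum_integral_mul_condTopStatPU (P : PartUnity X) (hQ : Q.Meas) :
    1 ≤ ∑ j, (∫ x, Q.f j x ∂μ) * condTopStatPU P (Q.f j) :=
  (Q.sum_integral hQ).symm.trans_le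
    (Finset.sum_le_sum fun j _ => integral_le_integral_mul_condTopStatPU P hQ j)

/-- Concavity of `log`, in the form of the log-sum inequality with `c_q = μ(q) H̃(P|q)`. -/
theorem sum_integral_mul_log_le_log_condTopStat (P : PartUnity X) (hQ : Q.Meas) :
    ∑ j, (∫ x, Q.f j x ∂μ) * log (condTopStatPU P (Q.f j)) ≤ log (condTopStat P Q) := by
  have hle := integral_le_integral_mul_condTopStatPU (μ := μ) P hQ
  have hgibbs := sum_neg_mul_log_add_mul_log_le Finset.univ (p := fun j => ∫ x, Q.f j x ∂μ)
    (c := fun j => (∫ x, Q.f j x ∂μ) * condTopStatPU P (Q.f j))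
    (fun j => integral_nonneg fun x => Q.nonneg j x)
    (fun j => mul_nonneg (integral_nonneg fun x => Q.nonneg j x) (condTopStatPU_nonneg P _))
    (fun j hj => hj.trans_le (hle j))
  have hterm : ∀ j, -((∫ x, Q.f j x ∂μ) * log (∫ x, Q.f j x ∂μ)) +
      (∫ x, Q.f j x ∂μ) * log ((∫ x, Q.f j x ∂μ) * condTopStatPU P (Q.f j)) =
      (∫ x, Q.f j x ∂μ) * log (condTopStatPU P (Q.f j)) := by
    intro j
    rcases (integral_nonneg (μ := μ) (f := Q.f j) (Q.nonneg j)).eq_or_lt with h | h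
    · simp [← h]
    · have hH : 0 < condTopStatPU P (Q.f j) := pos_of_mul_pos_right (h.trans_le (hle j)) h.le
      rw [log_mul h.ne' hH.ne']
      ring
  simp only [hterm, Q.sum_integral hQ, log_one, mul_zero, neg_zero, zero_add, one_mul]
    at hgibbs
  exact hgibbs.trans (log_le_log (one_pos.trans_le (one_le_sum_integral_mul_condTopStatPU P hQ))
    (sum_mul_condTopStatPU_le_condTopStat (integral_mem_weights hQ)))

theorem statEnt_le_statEnt_add_log_condTopStat (hP : P.Meas) (hQ : Q.Meas) :
    statEnt μ P ≤ statEnt μ Q + log (condTopStat P Q) :=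
  (statEnt_le_statEnt_add_sum_mul_log_condTopStatPU hP hQ).trans
    (add_le_add le_rfl (sum_integral_mul_log_le_log_condTopStat P hQ))

end CondTopStat

theorem Filter.limsup_le_limsup_add_limsup {α : Type*} {f : Filter α} [f.NeBot]
    {u v w : α → ℝ} (hu : IsBoundedUnder (· ≥ ·) f u) (hv : IsBoundedUnder (· ≥ ·) f v)
    (hv' : IsBoundedUnder (· ≤ ·) f v) (hw : IsBoundedUnder (· ≥ ·) f w)
    (hw' : IsBoundedUnder (· ≤ ·) f w) (h : u ≤ᶠ[f] v + w) :
    limsup u f ≤ limsup v f + limsup w f :=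
  (limsup_le_limsup h hu.isCoboundedUnder_le (isBoundedUnder_le_add hv' hw')).trans
    (limsup_add_le hv hv' hw.isCoboundedUnder_le hw')

section Dynamics

theorem div_natCast_mem_Icc_of_le_mul {s c : ℝ} {n : ℕ} (hs : 0 ≤ s) (hc : 0 ≤ c)
    (h : s ≤ n * c) : s / n ∈ Icc 0 c :=
  ⟨div_nonneg hs n.cast_nonneg, div_le_of_le_mul₀ n.cast_nonneg hc (by rwa [mul_comm])⟩

theorem log_tailStat_div_mem_Icc [TopologicalSpace X] [Nonempty X] (T : X → X)
    (Φ Ψ : PartUnity X) (n : ℕ) : log (tailStat T Φ Ψ n) / n ∈ Icc 0 (log Φ.n) := by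
  rw [tailStat_eq_condTopStat]
  have h1 := one_le_condTopStat (Φ.dyn T n) (Ψ.dyn T n)
  have h2 := log_le_log (one_pos.trans_le h1) (condTopStat_le (Φ.dyn T n) (Ψ.dyn T n))
  rw [PartUnity.dyn_n, Nat.cast_pow, log_pow] at h2
  exact div_natCast_mem_Icc_of_le_mul (log_nonneg h1) (log_natCast_nonneg _) h2

variable [MeasurableSpace X] (μ : Measure X) [IsProbabilityMeasure μ] {T : X → X}
  {Φ Ψ : PartUnity X}

theorem statEnt_dyn_div_mem_Icc (hT : Measurable T) (hΦ : Φ.Meas) (n : ℕ) :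
    statEnt μ (Φ.dyn T n) / n ∈ Icc 0 (log Φ.n) := by
  have h := statEnt_le_log_n (μ := μ) (hΦ.dyn hT n)
  rw [PartUnity.dyn_n, Nat.cast_pow, log_pow] at h
  exact div_natCast_mem_Icc_of_le_mul (statEnt_nonneg (hΦ.dyn hT n)) (log_natCast_nonneg _) h

theorem locEnt_le_locEnt_add_tailLoc [TopologicalSpace X] (hT : Measurable T) (hΦ : Φ.Meas)
    (hΨ : Ψ.Meas) : locEnt T μ Φ ≤ locEnt T μ Ψ + tailLoc T Φ Ψ := by
  have := nonempty_of_isProbabilityMeasure μ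
  exact limsup_le_limsup_add_limsup
    (isBoundedUnder_of ⟨0, fun n => (statEnt_dyn_div_mem_Icc μ hT hΦ n).1⟩)
    (isBoundedUnder_of ⟨0, fun n => (statEnt_dyn_div_mem_Icc μ hT hΨ n).1⟩)
    (isBoundedUnder_of ⟨_, fun n => (statEnt_dyn_div_mem_Icc μ hT hΨ n).2⟩)
    (isBoundedUnder_of ⟨0, fun n => (log_tailStat_div_mem_Icc T Φ Ψ n).1⟩)
    (isBoundedUnder_of ⟨_, fun n => (log_tailStat_div_mem_Icc T Φ Ψ n).2⟩)
    (Eventually.of_forall fun n => by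
      rw [Pi.add_apply, ← add_div]
      exact div_le_div_of_nonneg_right
        (statEnt_le_statEnt_add_log_condTopStat (hΦ.dyn hT n) (hΨ.dyn hT n)) n.cast_nonneg)

end Dynamics

theorem iSup_entropy_defect_le_condTopEntPU_general {X : Type*} [MetricSpace X] [MeasurableSpace X]
    [BorelSpace X] (T : X → X) (hT : Continuous T) (Ψ : PartUnity X) (hΨ : Ψ.Cont) :
    (⨆ μ : {μ : Measure X // IsProbabilityMeasure μ ∧ MeasurePreserving T μ μ},
      (metEnt T μ.1 - ((locEnt T μ.1 Ψ : ℝ) : EReal))) ≤ condTopEntPU T Ψ := by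
  refine iSup_le fun ⟨μ, hμ, _⟩ => ?_
  rw [EReal.sub_le_iff_le_add (.inl (EReal.coe_ne_bot _)) (.inl (EReal.coe_ne_top _))]
  refine iSup_le fun ⟨Φ, hΦ⟩ => ?_
  have hloc := locEnt_le_locEnt_add_tailLoc μ hT.measurable hΦ.meas hΨ.meas
  calc ((locEnt T μ Φ : ℝ) : EReal) ≤ ((tailLoc T Φ Ψ : ℝ) : EReal) + (locEnt T μ Ψ : ℝ) := by
        rw [← EReal.coe_add, add_comm]
        exact EReal.coe_le_coe_iff.2 hloc
    _ ≤ condTopEntPU T Ψ + (locEnt T μ Ψ : ℝ) :=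
        add_le_add (le_iSup (fun Φ : {Φ : PartUnity X // Φ.Cont} =>
          ((tailLoc T Φ.1 Ψ : ℝ) : EReal)) ⟨Φ, hΦ⟩) le_rfl

/-- For any continuous partition of unity `Ψ`,
`sup_μ ( h̃_μ(T) − h̃_μ(T,Ψ) ) ≤ h̃(T|Ψ)`, the supremum running over `T`-invariant
Borel probability measures. -/
theorem iSup_entropy_defect_le_condTopEntPU {X : Type*} [MetricSpace X] [CompactSpace X] [Nonempty X]
    [MeasurableSpace X] [BorelSpace X]
    (T : X → X) (hT : Continuous T) (hTsurj : Function.Surjective T)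
    (Ψ : PartUnity X) (hΨ : Ψ.Cont) :
    (⨆ μ : {μ : Measure X // IsProbabilityMeasure μ ∧ MeasurePreserving T μ μ},
      (metEnt T μ.1 - ((locEnt T μ.1 Ψ : ℝ) : EReal))) ≤ condTopEntPU T Ψ :=
  iSup_entropy_defect_le_condTopEntPU_general T hT Ψ hΨ
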